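/- arXiv:2304.06259 — 6 statements merged into one kernel-verified Lean document; each statement's English description precedes it below -/
import Mathlib

section
/- Let R be a commutative ring, let s, t ∈ R, and suppose that h := 1 + s·t is a unit of R. Then the following identity of 2×2 matrices over R holds: !![1, 0; s, 1] * !![1, t; 0, 1] = !![h⁻¹, 0; 0, h] * !![1, t*h; 0, 1] * !![1, 0; s*h⁻¹, 1]. (This is the paper's formula (*): x₋γ(s)·x_γ(t) = h_γ(1/(1+st))·x_γ(t(1+st))·x₋γ(s/(1+st)) in SL₂.) -/
/-- Formula (*) of the paper, in `SL₂`: for a commutative ring `R` and `s t : R`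
such that `h = 1 + s*t` is a unit,
`x₋γ(s) · x_γ(t) = h_γ(h⁻¹) · x_γ(t·h) · x₋γ(s·h⁻¹)`. -/
theorem gauss_move_formula {R : Type*} [CommRing R] (s t : R) (h : Rˣ)
    (hh : (h : R) = 1 + s * t) :
    (!![1, 0; s, 1] : Matrix (Fin 2) (Fin 2) R) * !![1, t; 0, 1] =
      !![((h⁻¹ : Rˣ) : R), 0; 0, (h : R)] * !![1, t * (h : R); 0, 1] *
        !![1, 0; s * ((h⁻¹ : Rˣ) : R), 1] := by
  have h1 : ((h⁻¹ : Rˣ) : R) * (h : R) = 1 := h.inv_mul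
  ext i j
  fin_cases i <;> fin_cases j <;>
    simp [Matrix.mul_apply, Fin.sum_univ_succ]
  · linear_combination (-(1 + ((h⁻¹:Rˣ):R) * t * s)) * h1 + ((h⁻¹:Rˣ):R) * hh
  · linear_combination -t * h1
  · linear_combination -s * h1
  · linear_combination -hh
end

section
/- (Double centralizer theorem over fields, type A instance.) Let F be a field, let n ≥ 3, and let g ∈ SL_n(F). Suppose that g commutes with every transvection t_{kl}(1) = 1 + E_{kl} with k ≠ l, k ≠ 2 and l ≠ 1 (indices 1-based). Then there exist ω ∈ F and r ∈ F with ω^n = 1 such that g = ω • (1 + r • E_{12}); i.e. g is a central scalar matrix times an elementary transvection t_{12}(r). -/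
/-!
A matrix commuting with `E_{kl}` has vanishing off-diagonal entries in row `l` and in column `k`,
and `M k k = M l l`. For the allowed pairs `(k, l)` (using a third index, so `n ≥ 3`) this kills
every off-diagonal entry except the one at `(1, 2)` and makes the diagonal constant, so
`g = ω • 1 + c • E_{12}`. Its determinant is `ω ^ n`, which gives `ω ^ n = 1`, hence `ω ≠ 0`, and
`g = ω • t_{12}(c / ω)`.
-/

open Matrix

theorem Commute.of_one_add_right {R : Type*} [Ring R] {a b : R} (h : Commute a (1 + b)) :
    Commute a b := by
  simpa using h.sub_right (Commute.one_right a)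

namespace Matrix

variable {ι : Type*} [Fintype ι] [DecidableEq ι]

theorem eq_scalar_add_single_of_commute_single {R : Type*} [Semiring R]
    (hι : 3 ≤ ENat.card ι) {p q : ι} (hpq : p ≠ q) {M : Matrix ι ι R}
    (hM : ∀ k l, k ≠ l → k ≠ q → l ≠ p → Commute (single k l 1) M) :
    M = scalar ι (M p p) + single p q (M p q) := by
  ext a b
  obtain rfl | hab := eq_or_ne a b
  · obtain rfl | hap := eq_or_ne a p
    · simp [single_apply_of_col_ne _ _ hpq.symm]
    · simpa [hap, Ne.symm hap] using
        (diag_eq_of_commute_single (hM p a (Ne.symm hap) hpq hap)).symm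
  obtain ⟨rfl, rfl⟩ | hne := em (a = p ∧ b = q)
  · simp [hab]
  rw [add_apply, scalar_apply, diagonal_apply_ne _ hab, zero_add, single_apply,
    if_neg fun h => hne ⟨h.1.symm, h.2.symm⟩]
  obtain ⟨z, hza, hzq⟩ := ENat.exists_ne_ne_of_three_le hι a q
  obtain ⟨w, hwb, hwp⟩ := ENat.exists_ne_ne_of_three_le hι b p
  obtain hap | rfl := ne_or_eq a p
  · exact row_eq_zero_of_commute_single (hM z a hza hzq hap) (Ne.symm hab)
  · have hbq : b ≠ q := fun h => hne ⟨rfl, h⟩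
    exact col_eq_zero_of_commute_single (hM b w (Ne.symm hwb) hbq hwp) hab

theorem det_scalar_add_single {K : Type*} [Field K] {p q : ι} (hpq : p ≠ q) (ω d : K) :
    det (scalar ι ω + single p q d) = ω ^ Fintype.card ι := by
  obtain rfl | hω := eq_or_ne ω 0
  · have : Nonempty ι := ⟨p⟩
    rw [map_zero, zero_add, zero_pow Fintype.card_ne_zero]
    exact det_eq_zero_of_row_eq_zero q fun j => single_apply_of_row_ne hpq _ _ _
  · have : scalar ι ω + single p q d = ω • transvection p q (d / ω) := by
      rw [transvection, smul_add, smul_single, smul_eq_mul, mul_div_cancel₀ _ hω,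
        smul_one_eq_diagonal, scalar_apply]
    rw [this, det_smul, det_transvection_of_ne _ _ hpq, mul_one]

end Matrix

/-- Double centralizer theorem over a field, type A instance: if `g ∈ SL_n(F)` (`n ≥ 3`)
commutes with all elementary transvections `t_{kl}(1) = 1 + E_{kl}` with `k ≠ l`, `k ≠ 2`,
`l ≠ 1` (1-based indices), then `g = ω • t_{12}(r)` for some scalar `ω` with `ω^n = 1`
(so `ω • 1` is central in `SL_n(F)`) and some `r ∈ F`. -/
theorem double_centralizer_field_typeA {F : Type*} [Field F] {n : ℕ} (hn : 3 ≤ n)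
    (g : Matrix.SpecialLinearGroup (Fin n) F)
    (hg : ∀ k l : Fin n, k ≠ l → k ≠ ⟨1, by omega⟩ → l ≠ ⟨0, by omega⟩ →
      (g : Matrix (Fin n) (Fin n) F) * (1 + Matrix.single k l 1) =
        (1 + Matrix.single k l 1) * (g : Matrix (Fin n) (Fin n) F)) :
    ∃ ω r : F, ω ^ n = 1 ∧
      (g : Matrix (Fin n) (Fin n) F) =
        ω • (1 + r • Matrix.single (⟨0, by omega⟩ : Fin n) (⟨1, by omega⟩ : Fin n) 1) := by
  set p : Fin n := ⟨0, by omega⟩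
  set q : Fin n := ⟨1, by omega⟩
  have hpq : p ≠ q := by simp [p, q, Fin.ext_iff]
  have hg_eq := eq_scalar_add_single_of_commute_single (by simpa using hn) hpq
    fun k l hkl hk hl => (Commute.of_one_add_right (hg k l hkl hk hl)).symm
  set ω := (g : Matrix (Fin n) (Fin n) F) p p
  have hω : ω ^ n = 1 := by
    rw [← g.det_coe, hg_eq, det_scalar_add_single hpq, Fintype.card_fin]
  have hω0 : ω ≠ 0 := by rintro h; simp [h, show n ≠ 0 by omega] at hω
  refine ⟨ω, (g : Matrix (Fin n) (Fin n) F) p q / ω, hω, ?_⟩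
  rw [smul_add, smul_one_eq_diagonal, smul_smul, mul_div_cancel₀ _ hω0, smul_single, smul_eq_mul,
    mul_one, ← scalar_apply]
  exact hg_eq
end

section
/- (Modified Gauss decomposition over a local ring.) Let R be a commutative local ring with maximal ideal 𝔪, let n ≥ 1, and let g ∈ SL_n(R) be such that all entries of g strictly below the diagonal lie in 𝔪 (i.e. the reduction of g modulo 𝔪 is upper triangular). Then there exist an upper unitriangular matrix u, a diagonal matrix d all of whose diagonal entries are units of R, and a lower unitriangular matrix l all of whose entries strictly below the diagonal lie in 𝔪, such that g = u · d · l. -/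
private lemma isUnit_sub_mem' {R : Type*} [CommRing R] [IsLocalRing R] {a m : R}
    (ha : IsUnit a) (hm : m ∈ IsLocalRing.maximalIdeal R) : IsUnit (a - m) := by
  by_contra h
  have h2 : a - m ∈ IsLocalRing.maximalIdeal R :=
    (IsLocalRing.mem_maximalIdeal _).mpr (mem_nonunits_iff.mpr h)
  have h3 : a ∈ IsLocalRing.maximalIdeal R := by
    have := Ideal.add_mem _ h2 hm
    simpa using this
  exact mem_nonunits_iff.mp ((IsLocalRing.mem_maximalIdeal _).mp h3) ha

private lemma gauss_aux {R : Type*} [CommRing R] [IsLocalRing R] :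
    ∀ (n : ℕ) (g : Matrix (Fin n) (Fin n) R),
      (∀ i, IsUnit (g i i)) →
      (∀ i j : Fin n, j < i → g i j ∈ IsLocalRing.maximalIdeal R) →
      ∃ (u : Matrix (Fin n) (Fin n) R) (v : Fin n → R) (l : Matrix (Fin n) (Fin n) R),
        (∀ i, u i i = 1) ∧ (∀ i j : Fin n, j < i → u i j = 0) ∧
        (∀ i, IsUnit (v i)) ∧
        (∀ i, l i i = 1) ∧ (∀ i j : Fin n, i < j → l i j = 0) ∧
        (∀ i j : Fin n, j < i → l i j ∈ IsLocalRing.maximalIdeal R) ∧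
        g = u * Matrix.diagonal v * l := by
  intro n
  induction n with
  | zero =>
    intro g _ _
    exact ⟨1, 1, 1, fun i => i.elim0, fun i => i.elim0, fun i => i.elim0,
      fun i => i.elim0, fun i => i.elim0, fun i => i.elim0, by ext i j; exact i.elim0⟩
  | succ n IH =>
    intro g hdiag hbelow
    have ha : IsUnit (g (Fin.last n) (Fin.last n)) := hdiag (Fin.last n)
    set a := g (Fin.last n) (Fin.last n) with haa
    set ai : R := ↑ha.unit⁻¹ with hai
    have hai1 : ai * a = 1 := ha.val_inv_mul
    have hai2 : a * ai = 1 := ha.mul_val_inv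
    have hcs : ∀ k : Fin n, k.castSucc ≠ Fin.last n := fun k => (Fin.castSucc_lt_last k).ne
    set M : Matrix (Fin n) (Fin n) R := fun i j =>
      g i.castSucc j.castSucc - g i.castSucc (Fin.last n) * (ai * g (Fin.last n) j.castSucc)
      with hM
    have hMd : ∀ i, IsUnit (M i i) := by
      intro i
      apply isUnit_sub_mem' (hdiag _)
      exact Ideal.mul_mem_left _ _ (Ideal.mul_mem_left _ _
        (hbelow (Fin.last n) i.castSucc (Fin.castSucc_lt_last i)))
    have hMb : ∀ i j : Fin n, j < i → M i j ∈ IsLocalRing.maximalIdeal R := by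
      intro i j hij
      apply sub_mem
      · exact hbelow _ _ (by simpa using hij)
      · exact Ideal.mul_mem_left _ _ (Ideal.mul_mem_left _ _
          (hbelow (Fin.last n) j.castSucc (Fin.castSucc_lt_last j)))
    obtain ⟨u₁, v₁, l₁, hu1, hu2, hv1, hl1, hl2, hl3, heq⟩ := IH M hMd hMb
    refine ⟨(fun i j => if hi : i = Fin.last n then (if j = Fin.last n then 1 else 0)
        else if hj : j = Fin.last n then g i (Fin.last n) * ai
        else u₁ (i.castPred hi) (j.castPred hj)),
      (fun k => if hk : k = Fin.last n then a else v₁ (k.castPred hk)),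
      (fun i j => if hi : i = Fin.last n then (if j = Fin.last n then 1 else ai * g (Fin.last n) j)
        else if hj : j = Fin.last n then 0
        else l₁ (i.castPred hi) (j.castPred hj)),
      ?_, ?_, ?_, ?_, ?_, ?_, ?_⟩
    · intro i
      by_cases hi : i = Fin.last n <;> simp [hi, hu1]
    · intro i j hij
      by_cases hi : i = Fin.last n
      · have hj : j ≠ Fin.last n := by rw [← hi]; exact hij.ne
        simp [hi, hj]
      · have hj : j ≠ Fin.last n := by
          intro h; subst h; exact absurd (hij.trans_le (Fin.le_last i)) (lt_irrefl _)
        have hlt : j.castPred hj < i.castPred hi := by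
          rw [Fin.lt_def, Fin.coe_castPred, Fin.coe_castPred]; exact hij
        simp [hi, hj, hu2 _ _ hlt]
    · intro k
      by_cases hk : k = Fin.last n
      · simpa [hk] using ha
      · simpa [hk] using hv1 _
    · intro i
      by_cases hi : i = Fin.last n <;> simp [hi, hl1]
    · intro i j hij
      by_cases hi : i = Fin.last n
      · subst hi; exact absurd hij (not_lt.mpr (Fin.le_last j))
      · by_cases hj : j = Fin.last n
        · simp [hi, hj]
        · have hlt : i.castPred hi < j.castPred hj := by
            rw [Fin.lt_def, Fin.coe_castPred, Fin.coe_castPred]; exact hij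
          simp [hi, hj, hl2 _ _ hlt]
    · intro i j hij
      by_cases hi : i = Fin.last n
      · have hj : j ≠ Fin.last n := by rw [← hi]; exact hij.ne
        subst hi
        simpa [hj] using Ideal.mul_mem_left _ _ (hbelow (Fin.last n) j hij)
      · have hj : j ≠ Fin.last n := by
          intro h; subst h; exact absurd (hij.trans_le (Fin.le_last i)) (lt_irrefl _)
        have hlt : j.castPred hj < i.castPred hi := by
          rw [Fin.lt_def, Fin.coe_castPred, Fin.coe_castPred]; exact hij
        simpa [hi, hj] using hl3 _ _ hlt
    · ext i j
      erw [Matrix.mul_apply]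
      erw [Finset.sum_congr rfl fun x _ => congrArg (· * _) (Matrix.mul_diagonal _ _ _ _)]
      rw [Fin.sum_univ_castSucc]
      by_cases hi : i = Fin.last n <;> by_cases hj : j = Fin.last n
      · simp [hi, hj, hcs, haa]
      · subst hi
        simp [hj, hcs]
        rw [← mul_assoc, hai2, one_mul]
      · subst hj
        simp [hi, hcs]
        rw [mul_assoc, hai1, mul_one]
      · have key : M (i.castPred hi) (j.castPred hj)
            = ∑ x : Fin n, u₁ (i.castPred hi) x * v₁ x * l₁ x (j.castPred hj) := by
          rw [heq, Matrix.mul_apply]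
          simp only [Matrix.mul_diagonal]
        simp only [dif_neg hi, dif_neg hj, dif_neg (hcs _), dif_pos rfl,
          Fin.castPred_castSucc, if_neg hj, dite_true]
        rw [← key]
        simp only [hM, Fin.castSucc_castPred]
        rw [mul_assoc (g i (Fin.last n)) ai a, hai1, mul_one]
        ring

/-- Modified Gauss decomposition over a local ring: if `g ∈ SL_n(R)` with `R` a
commutative local ring with maximal ideal `𝔪`, and all entries of `g` strictly below
the diagonal lie in `𝔪`, then `g = u · d · l` where `u` is upper unitriangular, `d` is
diagonal with unit diagonal entries, and `l` is lower unitriangular with all entries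
strictly below the diagonal in `𝔪`. -/
theorem gauss_decomposition_local {R : Type*} [CommRing R] [IsLocalRing R] {n : ℕ}
    (hn : 1 ≤ n) (g : Matrix.SpecialLinearGroup (Fin n) R)
    (hg : ∀ i j : Fin n, j < i →
      (g : Matrix (Fin n) (Fin n) R) i j ∈ IsLocalRing.maximalIdeal R) :
    ∃ u d l : Matrix (Fin n) (Fin n) R,
      (∀ i, u i i = 1) ∧ (∀ i j : Fin n, j < i → u i j = 0) ∧
      (∀ i j : Fin n, i ≠ j → d i j = 0) ∧ (∀ i, IsUnit (d i i)) ∧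
      (∀ i, l i i = 1) ∧ (∀ i j : Fin n, i < j → l i j = 0) ∧
      (∀ i j : Fin n, j < i → l i j ∈ IsLocalRing.maximalIdeal R) ∧
      (g : Matrix (Fin n) (Fin n) R) = u * d * l := by
  set φ := Ideal.Quotient.mk (IsLocalRing.maximalIdeal R) with hφ
  set A : Matrix (Fin n) (Fin n) (R ⧸ IsLocalRing.maximalIdeal R) :=
    φ.mapMatrix (g : Matrix (Fin n) (Fin n) R) with hA
  have hAtri : A.BlockTriangular id := by
    intro i j hij
    show φ ((g : Matrix (Fin n) (Fin n) R) i j) = 0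
    exact (Ideal.Quotient.eq_zero_iff_mem).mpr (hg i j hij)
  have hdetA : A.det = 1 := by
    rw [hA, ← RingHom.map_det]
    rw [g.prop]
    exact map_one φ
  have hprod : ∏ i : Fin n, φ ((g : Matrix (Fin n) (Fin n) R) i i) = 1 := by
    have h := Matrix.det_of_upperTriangular hAtri
    rw [h] at hdetA
    simpa [hA, RingHom.mapMatrix_apply, Matrix.map_apply] using hdetA
  have hdiag : ∀ i : Fin n, IsUnit ((g : Matrix (Fin n) (Fin n) R) i i) := by
    intro i
    by_contra hni
    have hmem : (g : Matrix (Fin n) (Fin n) R) i i ∈ IsLocalRing.maximalIdeal R :=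
      (IsLocalRing.mem_maximalIdeal _).mpr (mem_nonunits_iff.mpr hni)
    have h0 : φ ((g : Matrix (Fin n) (Fin n) R) i i) = 0 :=
      (Ideal.Quotient.eq_zero_iff_mem).mpr hmem
    have hunit : IsUnit (φ ((g : Matrix (Fin n) (Fin n) R) i i)) := by
      exact IsUnit.of_mul_eq_one _
        ((Finset.mul_prod_erase Finset.univ
          (fun x => φ ((g : Matrix (Fin n) (Fin n) R) x x))
          (Finset.mem_univ i)).trans hprod)
    rw [h0] at hunit
    exact zero_ne_one (isUnit_zero_iff.mp hunit)
  obtain ⟨u, v, l, hu1, hu2, hv, hl1, hl2, hl3, heq⟩ :=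
    gauss_aux n (g : Matrix (Fin n) (Fin n) R) hdiag hg
  exact ⟨u, Matrix.diagonal v, l, hu1, hu2,
    fun i j hij => Matrix.diagonal_apply_ne v hij,
    fun i => by simpa using hv i,
    hl1, hl2, hl3, heq⟩
end

section
/- (Double centralizer theorem, type C₂, short root, in Sp₄.) Let R be a commutative ring and let g ∈ Sp₄(R). Suppose that g commutes with each of 1 + (E₁₄ + E₂₃), 1 + E₁₃, and 1 + E₂₄, and that moreover, if 2 = 0 in R, g also commutes with 1 + (E₁₂ − E₄₃) and 1 + (E₂₁ − E₃₄) (so that g commutes with every type C₂ root element at parameter 1 that commutes with x_{e₁+e₂}(1) = 1 + (E₁₄ + E₂₃)). Then there exist ω, t₁, t₂, t₃ ∈ R with ω² = 1 such that g = ω • (1 + t₁·(E₁₄ + E₂₃) + t₂·E₁₃ + t₃·E₂₄); i.e. g = c·x_{e₁+e₂}(t₁)·x_{2e₁}(t₂)·x_{2e₂}(t₃) with c a central scalar matrix. -/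
/-!
Commuting with the matrix units `E₁₃` and `E₂₄` forces `g` into the block form
`[[a, 0, *, *], [0, b, *, *], [0, 0, a, 0], [0, 0, 0, b]]`, and commuting with `E₁₄ + E₂₃`
forces `a = b`. A block matrix `fromBlocks (a • 1) Q 0 (a • 1)` is symplectic only if `a² = 1`
and `Q` is symmetric, so `g = a • fromBlocks 1 (a • Q) 0 1`, and a unipotent matrix with
symmetric upper-right block is the claimed product of root elements.
-/

open Matrix

/-- The 4×4 matrix unit over `R`, with rows and columns indexed by `Fin 2 ⊕ Fin 2`
(so that `1,2,3,4` correspond to `inl 0, inl 1, inr 0, inr 1`). -/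
def Esp (R : Type*) [CommRing R] (i j : Fin 2 ⊕ Fin 2) :
    Matrix (Fin 2 ⊕ Fin 2) (Fin 2 ⊕ Fin 2) R :=
  Matrix.single i j 1

theorem Commute.of_one_add_left {A : Type*} [Ring A] {a b : A} (h : Commute (1 + a) b) :
    Commute a b := by
  simpa using h.sub_left (Commute.one_left b)

namespace Matrix

theorem diag_eq_of_commute_single_add_single {n α : Type*} [Fintype n] [DecidableEq n]
    [Semiring α] {i j k l : n} {M : Matrix n n α} (hki : k ≠ i) (hlj : l ≠ j)
    (hM : Commute (single i j 1 + single k l 1) M) : M i i = M j j := by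
  have := ext_iff.mpr hM i j
  simp_all [add_mul, mul_add, single_mul_apply_of_ne _ _ _ _ _ hki.symm,
    mul_single_apply_of_ne _ _ _ _ _ hlj.symm]

variable {l R : Type*} [DecidableEq l] [CommRing R]

theorem mul_self_eq_one_and_isSymm_of_fromBlocks_mem_symplecticGroup [Fintype l] [Nonempty l]
    {a : R} {Q : Matrix l l R} (h : fromBlocks (a • 1) Q 0 (a • 1) ∈ symplecticGroup l R) :
    a * a = 1 ∧ Q.IsSymm := by
  obtain ⟨-, hQ, ha⟩ := SymplecticGroup.fromBlocks_mem_iff.mp h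
  simp only [transpose_smul, transpose_one, transpose_zero, zero_mul, sub_zero, one_mul,
    mul_one, mul_smul_comm, smul_mul] at hQ ha
  have haa : a * a = 1 := by
    simpa using congrFun₂ ha (Classical.arbitrary l) (Classical.arbitrary l)
  refine ⟨haa, show Qᵀ = Q from ?_⟩
  simpa only [smul_smul, haa, one_smul] using congrArg (a • ·) hQ

theorem fromBlocks_smul_one_of_mul_self_eq_one {a : R} (ha : a * a = 1) (Q : Matrix l l R) :
    (fromBlocks (a • 1) Q 0 (a • 1) : Matrix (l ⊕ l) (l ⊕ l) R) =
      a • fromBlocks 1 (a • Q) 0 1 := by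
  simp [fromBlocks_smul, smul_smul, ha]

end Matrix

theorem fromBlocks_one_zero_one_eq_Esp {R : Type*} [CommRing R]
    {S : Matrix (Fin 2) (Fin 2) R} (hS : S.IsSymm) :
    fromBlocks 1 S 0 1 = 1 + S 0 1 • (Esp R (.inl 0) (.inr 1) + Esp R (.inl 1) (.inr 0)) +
      S 0 0 • Esp R (.inl 0) (.inr 0) + S 1 1 • Esp R (.inl 1) (.inr 1) := by
  ext (i | i) (j | j) <;> fin_cases i <;> fin_cases j <;> simp [Esp, one_apply, hS.apply 0 1]

theorem eq_fromBlocks_smul_one_of_commute_Esp {R : Type*} [CommRing R]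
    {g : Matrix (Fin 2 ⊕ Fin 2) (Fin 2 ⊕ Fin 2) R}
    (h13 : Commute (Esp R (.inl 0) (.inr 0)) g) (h24 : Commute (Esp R (.inl 1) (.inr 1)) g)
    (h14 : g (Sum.inl 0) (Sum.inl 0) = g (Sum.inr 1) (Sum.inr 1)) :
    g = fromBlocks (g (Sum.inl 0) (Sum.inl 0) • 1) g.toBlocks₁₂ 0
      (g (Sum.inl 0) (Sum.inl 0) • 1) := by
  have d13 := diag_eq_of_commute_single h13
  have d24 := diag_eq_of_commute_single h24
  ext (i | i) (j | j) <;> fin_cases i <;> fin_cases j <;>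
    simp [col_eq_zero_of_commute_single h13, col_eq_zero_of_commute_single h24,
      row_eq_zero_of_commute_single h13, row_eq_zero_of_commute_single h24, toBlocks₁₂,
      ← d13, ← h14, d24]

theorem double_centralizer_C2_short_general {R : Type*} [CommRing R]
    (g : Matrix (Fin 2 ⊕ Fin 2) (Fin 2 ⊕ Fin 2) R)
    (hg : g ∈ Matrix.symplecticGroup (Fin 2) R)
    (h1 : g * (1 + (Esp R (.inl 0) (.inr 1) + Esp R (.inl 1) (.inr 0))) =
      (1 + (Esp R (.inl 0) (.inr 1) + Esp R (.inl 1) (.inr 0))) * g)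
    (h2 : g * (1 + Esp R (.inl 0) (.inr 0)) = (1 + Esp R (.inl 0) (.inr 0)) * g)
    (h3 : g * (1 + Esp R (.inl 1) (.inr 1)) = (1 + Esp R (.inl 1) (.inr 1)) * g) :
    ∃ ω t₁ t₂ t₃ : R, ω ^ 2 = 1 ∧
      g = ω • (1 + t₁ • (Esp R (.inl 0) (.inr 1) + Esp R (.inl 1) (.inr 0)) +
        t₂ • Esp R (.inl 0) (.inr 0) + t₃ • Esp R (.inl 1) (.inr 1)) := by
  have h14 := diag_eq_of_commute_single_add_single (by simp) (by simp)
    (Commute.of_one_add_left h1.symm)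
  have hblocks := eq_fromBlocks_smul_one_of_commute_Esp (Commute.of_one_add_left h2.symm)
    (Commute.of_one_add_left h3.symm) h14
  set a := g (.inl 0) (.inl 0)
  set Q := g.toBlocks₁₂
  obtain ⟨ha, hQ⟩ :=
    mul_self_eq_one_and_isSymm_of_fromBlocks_mem_symplecticGroup (hblocks ▸ hg)
  refine ⟨a, a * Q 0 1, a * Q 0 0, a * Q 1 1, sq a ▸ ha, ?_⟩
  rw [hblocks, fromBlocks_smul_one_of_mul_self_eq_one ha,
    fromBlocks_one_zero_one_eq_Esp (hQ.smul a)]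
  simp only [Matrix.smul_apply, smul_eq_mul]

/-- Double centralizer theorem, type `C₂`, short root, in `Sp₄`: if `g ∈ Sp₄(R)` commutes
with `1 + (E₁₄ + E₂₃)`, `1 + E₁₃` and `1 + E₂₄`, and moreover, in case `2 = 0` in `R`,
also with `1 + (E₁₂ - E₄₃)` and `1 + (E₂₁ - E₃₄)` (so that `g` commutes with every type
`C₂` root element at parameter 1 commuting with `x_{e₁+e₂}(1) = 1 + (E₁₄ + E₂₃)`), then
`g = ω • (1 + t₁·(E₁₄ + E₂₃) + t₂·E₁₃ + t₃·E₂₄)` for some `ω, t₁, t₂, t₃ ∈ R` with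
`ω² = 1`; that is, `g = c · x_{e₁+e₂}(t₁) · x_{2e₁}(t₂) · x_{2e₂}(t₃)` with `c` central. -/
theorem double_centralizer_C2_short {R : Type*} [CommRing R]
    (g : Matrix (Fin 2 ⊕ Fin 2) (Fin 2 ⊕ Fin 2) R)
    (hg : g ∈ Matrix.symplecticGroup (Fin 2) R)
    (h1 : g * (1 + (Esp R (.inl 0) (.inr 1) + Esp R (.inl 1) (.inr 0))) =
      (1 + (Esp R (.inl 0) (.inr 1) + Esp R (.inl 1) (.inr 0))) * g)
    (h2 : g * (1 + Esp R (.inl 0) (.inr 0)) = (1 + Esp R (.inl 0) (.inr 0)) * g)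
    (h3 : g * (1 + Esp R (.inl 1) (.inr 1)) = (1 + Esp R (.inl 1) (.inr 1)) * g)
    (h4 : (2 : R) = 0 →
      g * (1 + (Esp R (.inl 0) (.inl 1) - Esp R (.inr 1) (.inr 0))) =
        (1 + (Esp R (.inl 0) (.inl 1) - Esp R (.inr 1) (.inr 0))) * g ∧
      g * (1 + (Esp R (.inl 1) (.inl 0) - Esp R (.inr 0) (.inr 1))) =
        (1 + (Esp R (.inl 1) (.inl 0) - Esp R (.inr 0) (.inr 1))) * g) :
    ∃ ω t₁ t₂ t₃ : R, ω ^ 2 = 1 ∧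
      g = ω • (1 + t₁ • (Esp R (.inl 0) (.inr 1) + Esp R (.inl 1) (.inr 0)) +
        t₂ • Esp R (.inl 0) (.inr 0) + t₃ • Esp R (.inl 1) (.inr 1)) :=
  double_centralizer_C2_short_general g hg h1 h2 h3
end

section
/- (The set Y is Diophantine in Sp₄; instance of the paper's Proposition on G_{sc}(C₂,R).) Let R be a commutative ring. Then {⁅g, 1 + (E₂₁ − E₃₄)⁆ : g ∈ Sp₄(R) and g commutes with each of 1 + E₁₃, 1 + E₂₄, 1 + E₄₂, 1 + (E₁₂ − E₄₃), 1 + (E₁₄ + E₂₃)} = {1 + t·(E₁₄ + E₂₃) + t·E₂₄ : t ∈ R}, where ⁅x, y⁆ = x·y·x⁻¹·y⁻¹. In other words, the set Y = {x_{e₁+e₂}(t)·x_{2e₂}(t) : t ∈ R} equals the set of commutators of elements of the centralizer of Γ_{2e₁} with the fixed element x_{e₂−e₁}(1) = 1 + (E₂₁ − E₃₄). -/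
open Matrix

theorem commute_one_add_right_iff {A : Type*} [Ring A] {a b : A} :
    Commute a (1 + b) ↔ Commute a b :=
  ⟨fun h => by simpa using h.sub_right (Commute.one_right a),
    fun h => (Commute.one_right a).add_right h⟩

section Algebra

variable {R A : Type*} [CommRing R] [Ring A] [Algebra R A] {N X : A}

theorem Commute.one_add_smul_one_add (h : Commute N X) (t : R) :
    Commute (1 + t • N) (1 + X) :=
  commute_one_add_right_iff.2 ((Commute.one_left X).add_left (h.smul_left t))

theorem smul_one_add_smul_mul_smul_one_add_smul (hN : N * N = 0) (a b a' b' : R) :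
    (a • 1 + b • N) * (a' • 1 + b' • N) = (a * a') • 1 + (a * b' + b * a') • N := by
  simp only [add_mul, mul_add, smul_mul_smul, one_mul, mul_one, hN, smul_zero, add_smul]
  abel

theorem smul_one_add_smul_conj_one_add_mul_one_sub (hN : N * N = 0) (hX : X * X = 0)
    (hNXN : N * X * N = 0) {a b a' b' : R} (ha : a * a' = 1) (hb : a * b' + b * a' = 0) :
    (a • 1 + b • N) * (1 + X) * (a' • 1 + b' • N) * (1 - X) =
      1 + (a * b') • (X * N - N * X - X * N * X) := by
  simp only [add_mul, mul_add, mul_sub, smul_mul_assoc, mul_smul_comm, one_mul, mul_one,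
    hN, hX, hNXN, smul_zero, mul_assoc]
  simp only [← mul_assoc, mul_zero, zero_mul, smul_zero]
  match_scalars
  · linear_combination ha
  · linear_combination hb
  all_goals ring

end Algebra

theorem Matrix.fromBlocks_one_mem_symplecticGroup {l R : Type*} [DecidableEq l] [Fintype l]
    [CommRing R] {S : Matrix l l R} (hS : S.IsSymm) :
    fromBlocks 1 S 0 1 ∈ symplecticGroup l R :=
  SymplecticGroup.fromBlocks_mem_iff.2 ⟨by simp, by simpa using hS.eq, by simp⟩

section Sp4

variable {R : Type*} [CommRing R]

theorem one_add_smul_Esp_mem_symplecticGroup (i : Fin 2) (t : R) :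
    1 + t • Esp R (.inl i) (.inr i) ∈ symplecticGroup (Fin 2) R := by
  have hblocks : 1 + t • Esp R (.inl i) (.inr i) = fromBlocks 1 (single i i t) 0 1 := by
    ext (k | k) (l | l) <;> simp [Esp, single, one_apply, fromBlocks]
  rw [hblocks]
  exact fromBlocks_one_mem_symplecticGroup (transpose_single i i t)

theorem Esp_inl_inr_mul_self (i j : Fin 2) :
    Esp R (.inl i) (.inr j) * Esp R (.inl i) (.inr j) = 0 := by
  simp [Esp]

theorem exists_eq_smul_one_add_smul_Esp_of_commute
    {g : Matrix (Fin 2 ⊕ Fin 2) (Fin 2 ⊕ Fin 2) R}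
    (h13 : Commute (Esp R (.inl 0) (.inr 0)) g) (h24 : Commute (Esp R (.inl 1) (.inr 1)) g)
    (h42 : Commute (Esp R (.inr 1) (.inl 1)) g)
    (h12 : Commute (Esp R (.inl 0) (.inl 1) - Esp R (.inr 1) (.inr 0)) g) :
    ∃ a b : R, g = a • 1 + b • Esp R (.inl 0) (.inr 0) := by
  have h22 : g (.inl 1) (.inl 1) = g (.inl 0) (.inl 0) := by
    simpa [Esp, mul_apply] using congr_fun₂ h12.eq (.inl 0) (.inl 1)
  have h33 := diag_eq_of_commute_single h13
  have h44 := diag_eq_of_commute_single h24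
  refine ⟨g (.inl 0) (.inl 0), g (.inl 0) (.inr 0), ?_⟩
  ext i j
  fin_cases i <;> fin_cases j <;>
    simp [Esp, one_apply, col_eq_zero_of_commute_single h13, row_eq_zero_of_commute_single h13,
      col_eq_zero_of_commute_single h24, row_eq_zero_of_commute_single h24,
      col_eq_zero_of_commute_single h42, row_eq_zero_of_commute_single h42, h22, ← h33, ← h44]

theorem smul_one_add_smul_Esp_commutator {a b a' b' : R} (ha : a * a' = 1)
    (hb : a * b' + b * a' = 0) :
    (a • 1 + b • Esp R (.inl 0) (.inr 0)) *
        (1 + (Esp R (.inl 1) (.inl 0) - Esp R (.inr 0) (.inr 1))) *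
        (a' • 1 + b' • Esp R (.inl 0) (.inr 0)) *
        (1 - (Esp R (.inl 1) (.inl 0) - Esp R (.inr 0) (.inr 1))) =
      1 + (a * b') • (Esp R (.inl 0) (.inr 1) + Esp R (.inl 1) (.inr 0)) +
        (a * b') • Esp R (.inl 1) (.inr 1) := by
  rw [smul_one_add_smul_conj_one_add_mul_one_sub (Esp_inl_inr_mul_self 0 0)
    (by simp [Esp, sub_mul, mul_sub]) (by simp [Esp, mul_sub]) ha hb]
  simp only [Esp, sub_mul, mul_sub, single_mul_single_same, ne_eq, reduceCtorEq,
    not_false_eq_true, single_mul_single_of_ne, zero_sub, sub_zero, mul_one]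
  module

theorem exists_commutator_eq_of_commute {g gi : Matrix (Fin 2 ⊕ Fin 2) (Fin 2 ⊕ Fin 2) R}
    (hggi : g * gi = 1) (hgig : gi * g = 1)
    (h13 : Commute g (1 + Esp R (.inl 0) (.inr 0)))
    (h24 : Commute g (1 + Esp R (.inl 1) (.inr 1)))
    (h42 : Commute g (1 + Esp R (.inr 1) (.inl 1)))
    (h12 : Commute g (1 + (Esp R (.inl 0) (.inl 1) - Esp R (.inr 1) (.inr 0)))) :
    ∃ t : R, g * (1 + (Esp R (.inl 1) (.inl 0) - Esp R (.inr 0) (.inr 1))) * gi *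
        (1 - (Esp R (.inl 1) (.inl 0) - Esp R (.inr 0) (.inr 1))) =
      1 + t • (Esp R (.inl 0) (.inr 1) + Esp R (.inl 1) (.inr 0)) +
        t • Esp R (.inl 1) (.inr 1) := by
  have centralizes {X} (h : Commute g (1 + X)) : Commute X g ∧ Commute X gi :=
    have hX := commute_one_add_right_iff.1 h
    ⟨hX.symm, (Commute.units_inv_left (u := ⟨g, gi, hggi, hgig⟩) hX).symm⟩
  obtain ⟨a', b', rfl⟩ := exists_eq_smul_one_add_smul_Esp_of_commute (centralizes h13).2
    (centralizes h24).2 (centralizes h42).2 (centralizes h12).2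
  obtain ⟨a, b, rfl⟩ := exists_eq_smul_one_add_smul_Esp_of_commute (centralizes h13).1
    (centralizes h24).1 (centralizes h42).1 (centralizes h12).1
  rw [smul_one_add_smul_mul_smul_one_add_smul (Esp_inl_inr_mul_self 0 0)] at hggi
  have ha : a * a' = 1 := by simpa [Esp] using congr_fun₂ hggi (.inl 0) (.inl 0)
  have hb : a * b' + b * a' = 0 := by simpa [Esp] using congr_fun₂ hggi (.inl 0) (.inr 0)
  exact ⟨a * b', smul_one_add_smul_Esp_commutator ha hb⟩

theorem commute_Esp_inl_zero_inr_zero_roots :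
    Commute (Esp R (.inl 0) (.inr 0)) (Esp R (.inl 1) (.inr 1)) ∧
      Commute (Esp R (.inl 0) (.inr 0)) (Esp R (.inr 1) (.inl 1)) ∧
      Commute (Esp R (.inl 0) (.inr 0)) (Esp R (.inl 0) (.inl 1) - Esp R (.inr 1) (.inr 0)) ∧
      Commute (Esp R (.inl 0) (.inr 0)) (Esp R (.inl 0) (.inr 1) + Esp R (.inl 1) (.inr 0)) := by
  simp [Commute, SemiconjBy, Esp, sub_mul, mul_sub, add_mul, mul_add]

end Sp4

/-- The set `Y = {x_{e₁+e₂}(t)·x_{2e₂}(t) : t ∈ R}` is Diophantine in `Sp₄(R)`: the set of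
commutators `⁅g, x_{e₂−e₁}(1)⁆ = g · x_{e₂−e₁}(1) · g⁻¹ · x_{e₂−e₁}(1)⁻¹`, where `g`
ranges over the elements of `Sp₄(R)` commuting with each of `1 + E₁₃`, `1 + E₂₄`,
`1 + E₄₂`, `1 + (E₁₂ − E₄₃)` and `1 + (E₁₄ + E₂₃)` (the type `C₂` root elements at
parameter 1 commuting with `x_{2e₁}(1) = 1 + E₁₃`), is exactly
`{1 + t·(E₁₄ + E₂₃) + t·E₂₄ : t ∈ R}`. Here `x_{e₂−e₁}(1) = 1 + (E₂₁ − E₃₄)` and its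
inverse is `1 − (E₂₁ − E₃₄)`. -/
theorem Y_diophantine_C2 {R : Type*} [CommRing R] :
    {m : Matrix (Fin 2 ⊕ Fin 2) (Fin 2 ⊕ Fin 2) R |
      ∃ g gi : Matrix (Fin 2 ⊕ Fin 2) (Fin 2 ⊕ Fin 2) R,
        g ∈ Matrix.symplecticGroup (Fin 2) R ∧ g * gi = 1 ∧ gi * g = 1 ∧
        g * (1 + Esp R (.inl 0) (.inr 0)) = (1 + Esp R (.inl 0) (.inr 0)) * g ∧
        g * (1 + Esp R (.inl 1) (.inr 1)) = (1 + Esp R (.inl 1) (.inr 1)) * g ∧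
        g * (1 + Esp R (.inr 1) (.inl 1)) = (1 + Esp R (.inr 1) (.inl 1)) * g ∧
        g * (1 + (Esp R (.inl 0) (.inl 1) - Esp R (.inr 1) (.inr 0))) =
          (1 + (Esp R (.inl 0) (.inl 1) - Esp R (.inr 1) (.inr 0))) * g ∧
        g * (1 + (Esp R (.inl 0) (.inr 1) + Esp R (.inl 1) (.inr 0))) =
          (1 + (Esp R (.inl 0) (.inr 1) + Esp R (.inl 1) (.inr 0))) * g ∧
        m = g * (1 + (Esp R (.inl 1) (.inl 0) - Esp R (.inr 0) (.inr 1))) * gi *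
          (1 - (Esp R (.inl 1) (.inl 0) - Esp R (.inr 0) (.inr 1)))} =
    {m : Matrix (Fin 2 ⊕ Fin 2) (Fin 2 ⊕ Fin 2) R | ∃ t : R,
      m = 1 + t • (Esp R (.inl 0) (.inr 1) + Esp R (.inl 1) (.inr 0)) +
        t • Esp R (.inl 1) (.inr 1)} := by
  ext m
  constructor
  · rintro ⟨g, gi, -, hggi, hgig, h13, h24, h42, h12, -, rfl⟩
    exact exists_commutator_eq_of_commute hggi hgig h13 h24 h42 h12
  · rintro ⟨t, rfl⟩
    have hN := Esp_inl_inr_mul_self (R := R) 0 0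
    obtain ⟨h24, h42, h12, h14⟩ := commute_Esp_inl_zero_inr_zero_roots (R := R)
    refine ⟨1 + (-t) • Esp R (.inl 0) (.inr 0), 1 + t • Esp R (.inl 0) (.inr 0),
      one_add_smul_Esp_mem_symplecticGroup 0 (-t),
      by simpa using smul_one_add_smul_mul_smul_one_add_smul hN (1 : R) (-t) 1 t,
      by simpa using smul_one_add_smul_mul_smul_one_add_smul hN (1 : R) t 1 (-t),
      (Commute.refl _).one_add_smul_one_add _, h24.one_add_smul_one_add _,
      h42.one_add_smul_one_add _, h12.one_add_smul_one_add _, h14.one_add_smul_one_add _, ?_⟩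
    simpa using (smul_one_add_smul_Esp_commutator (R := R) (a := 1) (b := -t) (a' := 1) (b' := t)
      (one_mul 1) (by ring)).symm
end

section
/- (Type C₂ root subgroup as a commutator set when 2 is invertible; instance of the paper's Proposition on G(C₂,R) with 1/2 ∈ R.) Let R be a commutative ring in which 2 is a unit. Then {⁅1 + t·(E₁₄ + E₂₃), 1 + 2⁻¹·(E₂₁ − E₃₄)⁆ : t ∈ R} = {1 + s·E₂₄ : s ∈ R}, where ⁅x, y⁆ = x·y·x⁻¹·y⁻¹ and the matrices are 4×4 matrices over R. In other words, commutating the short-root subgroup X_{e₁+e₂} with the fixed element x_{e₂−e₁}(1/2) yields exactly the long-root subgroup X_{2e₂} = {x_{2e₂}(s) : s ∈ R}. -/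
/-!
Write `X = E₁₄ + E₂₃`, `Y = E₂₁ − E₃₄` and `Z = E₂₄`. Then `X² = Y² = 0`, `XY = −Z`, `YX = Z`
and `ZX = ZY = 0`, so every word of length three in `X, Y` vanishes. Expanding, the commutator
of `1 + sX` and `1 + tY` collapses to `1 + st(XY − YX) = 1 − 2st·Z`; for `t = 1/2` this is
`1 − sZ`, and `s ↦ −s` is a bijection of `R`.
-/

open Matrix

theorem commutator_one_add_of_mul_self_eq_zero {A : Type*} [Ring A] {a b : A}
    (ha : a * a = 0) (hb : b * b = 0) (haba : a * b * a = 0) (hbab : b * a * b = 0) :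
    (1 + a) * (1 + b) * (1 - a) * (1 - b) = 1 + (a * b - b * a) := by
  have hxb : ∀ x, x * b * b = 0 := fun x => by rw [mul_assoc, hb, mul_zero]
  simp only [mul_add, add_mul, mul_sub, sub_mul, mul_one, one_mul, ha, hb, haba, hbab, hxb,
    zero_mul]
  abel

theorem commutator_one_add_smul_of_mul_self_eq_zero {R A : Type*} [CommRing R] [Ring A]
    [Algebra R A] {x y : A} (hx : x * x = 0) (hy : y * y = 0) (hxyx : x * y * x = 0)
    (hyxy : y * x * y = 0) (s t : R) :
    (1 + s • x) * (1 + t • y) * (1 - s • x) * (1 - t • y) = 1 + (s * t) • (x * y - y * x) := by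
  rw [commutator_one_add_of_mul_self_eq_zero] <;>
    simp only [smul_mul_smul, mul_comm t s, hx, hy, hxyx, hyxy, smul_zero, smul_sub]

section RootVectors

variable (R : Type*) [CommRing R]

theorem Esp_mul_Esp (i j k : Fin 2 ⊕ Fin 2) : Esp R i j * Esp R j k = Esp R i k := by
  rw [Esp, Esp, Esp, single_mul_single_same, one_mul]

theorem Esp_mul_Esp_of_ne {j k : Fin 2 ⊕ Fin 2} (i l : Fin 2 ⊕ Fin 2) (h : j ≠ k) :
    Esp R i j * Esp R k l = 0 := by
  simp [Esp, h]

-- Root vectors of `e₁ + e₂`, `e₂ − e₁` and `2e₂` in `sp₄`.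
local notation "X" => Esp R (Sum.inl 0) (Sum.inr 1) + Esp R (Sum.inl 1) (Sum.inr 0)
local notation "Y" => Esp R (Sum.inl 1) (Sum.inl 0) - Esp R (Sum.inr 0) (Sum.inr 1)
local notation "Z" => Esp R (Sum.inl 1) (Sum.inr 1)

theorem sumRoot_mul_self : X * X = 0 := by
  simp [add_mul, mul_add, Esp_mul_Esp_of_ne]

theorem diffRoot_mul_self : Y * Y = 0 := by
  simp [sub_mul, mul_sub, Esp_mul_Esp_of_ne]

theorem sumRoot_mul_diffRoot : X * Y = -Z := by
  simp [add_mul, mul_sub, Esp_mul_Esp, Esp_mul_Esp_of_ne]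

theorem diffRoot_mul_sumRoot : Y * X = Z := by
  simp [sub_mul, mul_add, Esp_mul_Esp, Esp_mul_Esp_of_ne]

theorem longRoot_mul_sumRoot : Z * X = 0 := by
  simp [mul_add, Esp_mul_Esp_of_ne]

theorem longRoot_mul_diffRoot : Z * Y = 0 := by
  simp [mul_sub, Esp_mul_Esp_of_ne]

theorem commutator_sumRoot_diffRoot (s t : R) :
    (1 + s • X) * (1 + t • Y) * (1 - s • X) * (1 - t • Y) = 1 - (2 * s * t) • Z := by
  have hXYX : X * Y * X = 0 := by
    rw [sumRoot_mul_diffRoot, neg_mul, longRoot_mul_sumRoot, neg_zero]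
  have hYXY : Y * X * Y = 0 := by rw [diffRoot_mul_sumRoot, longRoot_mul_diffRoot]
  rw [commutator_one_add_smul_of_mul_self_eq_zero (sumRoot_mul_self R) (diffRoot_mul_self R)
    hXYX hYXY, sumRoot_mul_diffRoot, diffRoot_mul_sumRoot]
  module

theorem commutator_sumRoot_half_diffRoot [Invertible (2 : R)] (t : R) :
    (1 + t • X) * (1 + (⅟(2 : R)) • Y) * (1 - t • X) * (1 - (⅟(2 : R)) • Y) = 1 - t • Z := by
  rw [commutator_sumRoot_diffRoot, mul_right_comm, mul_invOf_self, one_mul]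

end RootVectors

/-- Type `C₂` long-root subgroup as a commutator set when `2` is invertible: the set of
commutators `⁅x_{e₁+e₂}(t), x_{e₂−e₁}(1/2)⁆`, with
`x_{e₁+e₂}(t) = 1 + t·(E₁₄ + E₂₃)` (inverse `1 − t·(E₁₄ + E₂₃)`) and
`x_{e₂−e₁}(1/2) = 1 + 2⁻¹·(E₂₁ − E₃₄)` (inverse `1 − 2⁻¹·(E₂₁ − E₃₄)`), is exactly the
long-root subgroup `X_{2e₂} = {1 + s·E₂₄ : s ∈ R}`. -/
theorem root_subgroup_commutator_C2_half {R : Type*} [CommRing R] [Invertible (2 : R)] :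
    {m : Matrix (Fin 2 ⊕ Fin 2) (Fin 2 ⊕ Fin 2) R | ∃ t : R,
      m = (1 + t • (Esp R (.inl 0) (.inr 1) + Esp R (.inl 1) (.inr 0))) *
        (1 + (⅟(2 : R)) • (Esp R (.inl 1) (.inl 0) - Esp R (.inr 0) (.inr 1))) *
        (1 - t • (Esp R (.inl 0) (.inr 1) + Esp R (.inl 1) (.inr 0))) *
        (1 - (⅟(2 : R)) • (Esp R (.inl 1) (.inl 0) - Esp R (.inr 0) (.inr 1)))} =
    {m : Matrix (Fin 2 ⊕ Fin 2) (Fin 2 ⊕ Fin 2) R | ∃ s : R,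
      m = 1 + s • Esp R (.inl 1) (.inr 1)} := by
  ext m
  simp only [Set.mem_ofPred_eq, commutator_sumRoot_half_diffRoot]
  constructor
  · rintro ⟨t, rfl⟩
    exact ⟨-t, by rw [neg_smul, sub_eq_add_neg]⟩
  · rintro ⟨s, rfl⟩
    exact ⟨-s, by rw [neg_smul, sub_neg_eq_add]⟩
end
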